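/- For a finite connected simple graph Y with n vertices, the evaluations of the Tutte polynomial satisfy n·T_Y(1,0) ≤ T_Y(2,0). -/

import Mathlib

/-!
Write `α(G)` for the number of acyclic orientations of `G` and `β_q(G)` for the number of those
whose only source is `q`. Both satisfy deletion–contraction: an edge `uv` can be oriented `u → v`
exactly when `G - uv` has no directed path `v ⇝ u`, and the acyclic orientations of `G - uv` with
no directed path between `u` and `v` are those of `G / uv`; for `β_q` one uses an edge at `q`,
which must be oriented away from `q` (if `q` is isolated and `G` has edges, `β_q(G) = 0`).
The alternating sums `∑ (-1)^(|A| - r(A))` over all edge sets `A`, resp. over those spanning a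
connected subgraph, satisfy the same recursions (contraction merges parallel edges, which the
alternating sums over the fibres absorb), and they are `T(2,0)` and, for connected `G`, `T(1,0)`.
So `α = T(2,0)` and `β_q = T(1,0)` for each of the `n` vertices `q`, and the sets counted by the
`β_q` are disjoint sets of acyclic orientations.
-/

namespace AcycPaper

variable {V : Type*}

/-- `r` is an orientation of the graph `Y`: exactly one direction per edge. -/
def IsOrientation (Y : SimpleGraph V) (r : V → V → Prop) : Prop :=
  (∀ i j, Y.Adj i j ↔ (r i j ∨ r j i)) ∧ ∀ i j, r i j → ¬ r j i

/-- A relation is acyclic if it has no directed cycles. -/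
def IsAcyclicRel (r : V → V → Prop) : Prop := ∀ v, ¬ Relation.TransGen r v v

/-- The set of acyclic orientations of `Y`. -/
def Acyc (Y : SimpleGraph V) : Set (V → V → Prop) :=
  {r | IsOrientation Y r ∧ IsAcyclicRel r}

/-- `v` is a source: no edge points into `v`. -/
def IsSource (r : V → V → Prop) (v : V) : Prop := ∀ j, ¬ r j v

open Classical in
/-- Click (source-to-sink move) at `v`: reverse all edges incident to `v`. -/
def click (r : V → V → Prop) (v : V) : V → V → Prop :=
  fun i j => if v = i ∨ v = j then r j i else r i j

/-- One click step between acyclic orientations. -/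
def ClickStep (Y : SimpleGraph V) (r r' : V → V → Prop) : Prop :=
  r ∈ Acyc Y ∧ ∃ v, IsSource r v ∧ r' = click r v

/-- κ-equivalence: the equivalence relation generated by clicks. -/
def KEquiv (Y : SimpleGraph V) : (V → V → Prop) → (V → V → Prop) → Prop :=
  Relation.EqvGen (ClickStep Y)

/-- The set of κ-equivalence classes of acyclic orientations. -/
def KQuot (Y : SimpleGraph V) := Quot (fun a b : Acyc Y => ClickStep Y a.1 b.1)

/-- κ(Y): number of κ-equivalence classes. -/
noncomputable def kappa (Y : SimpleGraph V) : ℕ := Nat.card (KQuot Y)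

/-- α(Y): number of acyclic orientations. -/
noncomputable def alpha (Y : SimpleGraph V) : ℕ := Nat.card (Acyc Y)

/-- The rank of an edge set A over the vertex type V:
|V| minus the number of connected components of the spanning subgraph (V, A). -/
noncomputable def graphRank {V : Type*} [Fintype V] (A : Set (Sym2 V)) : ℕ :=
  Fintype.card V - Nat.card (SimpleGraph.fromEdgeSet A).ConnectedComponent

/-- The Tutte polynomial of Y evaluated at (x, y), via the Whitney rank
expansion T_Y(x,y) = ∑_{A ⊆ E} (x-1)^{r(E)-r(A)} (y-1)^{|A|-r(A)}. -/
noncomputable def tutte {V : Type*} [Fintype V] [DecidableEq V]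
    (Y : SimpleGraph V) [DecidableRel Y.Adj] (x y : ℤ) : ℤ :=
  ∑ A ∈ Y.edgeFinset.powerset,
    (x - 1) ^ (graphRank Y.edgeSet - graphRank (↑A : Set (Sym2 V))) *
      (y - 1) ^ (A.card - graphRank (↑A : Set (Sym2 V)))

open SimpleGraph Relation Finset
open scoped Function

section Components

variable {W : Type*}

noncomputable def numComponents (A : Set (Sym2 V)) : ℕ :=
  Nat.card (fromEdgeSet A).ConnectedComponent

lemma graphRank_eq_card_sub [Fintype V] (A : Set (Sym2 V)) :
    graphRank A = Fintype.card V - numComponents A := rfl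

lemma numComponents_le_card [Fintype V] (A : Set (Sym2 V)) :
    numComponents A ≤ Fintype.card V := by
  rw [← Nat.card_eq_fintype_card]
  exact Nat.card_le_card_of_surjective _ Quot.exists_rep

lemma numComponents_pos [Finite V] [Nonempty V] (A : Set (Sym2 V)) : 0 < numComponents A :=
  Nat.card_pos

lemma numComponents_empty [Fintype V] : numComponents (∅ : Set (Sym2 V)) = Fintype.card V := by
  rw [numComponents, fromEdgeSet_empty, ← Nat.card_eq_fintype_card]
  exact (Nat.card_eq_of_bijective _
    ⟨fun _ _ h => reachable_bot.1 (ConnectedComponent.exact h), Quot.exists_rep⟩).symm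

lemma numComponents_edgeSet_of_connected {G : SimpleGraph V} (hG : G.Connected) :
    numComponents G.edgeSet = 1 := by
  rw [numComponents, fromEdgeSet_edgeSet, Nat.card_eq_one_iff_unique]
  exact ⟨⟨fun c d => c.ind fun a => d.ind fun b => ConnectedComponent.sound (hG a b)⟩,
    ⟨G.connectedComponentMk hG.nonempty.some⟩⟩

lemma exists_mem_of_numComponents_eq_one [Finite V] {A : Set (Sym2 V)} (hA : numComponents A = 1)
    {x y : V} (hxy : x ≠ y) : ∃ z, s(x, z) ∈ A ∧ x ≠ z := by
  have : Subsingleton (fromEdgeSet A).ConnectedComponent :=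
    (Nat.card_eq_one_iff_unique.1 hA).1
  obtain ⟨p⟩ := ConnectedComponent.exact (Subsingleton.elim
    ((fromEdgeSet A).connectedComponentMk x) ((fromEdgeSet A).connectedComponentMk y))
  cases p with
  | nil => exact absurd rfl hxy
  | cons h _ => exact ⟨_, (fromEdgeSet_adj _).1 h⟩

lemma reachable_or_of_reachable_insert {A : Set (Sym2 V)} {a b x y : V}
    (h : (fromEdgeSet (insert s(a, b) A)).Reachable x y) :
    (fromEdgeSet A).Reachable x y ∨
      ((fromEdgeSet A).Reachable x a ∧ (fromEdgeSet A).Reachable b y) ∨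
      ((fromEdgeSet A).Reachable x b ∧ (fromEdgeSet A).Reachable a y) := by
  obtain ⟨p⟩ := h
  induction p with
  | nil => exact Or.inl .rfl
  | @cons x z y hadj p ih =>
    obtain ⟨he | he, hne⟩ := (fromEdgeSet_adj _).1 hadj
    · obtain ⟨rfl, rfl⟩ | ⟨rfl, rfl⟩ := Sym2.eq_iff.1 he <;>
        rcases ih with h | ⟨h₁, h₂⟩ | ⟨h₁, h₂⟩ <;> tauto
    · have hxz : (fromEdgeSet A).Reachable x z := ((fromEdgeSet_adj _).2 ⟨he, hne⟩).reachable
      rcases ih with h | ⟨h₁, h₂⟩ | ⟨h₁, h₂⟩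
      · exact Or.inl (hxz.trans h)
      · exact Or.inr (Or.inl ⟨hxz.trans h₁, h₂⟩)
      · exact Or.inr (Or.inr ⟨hxz.trans h₁, h₂⟩)

/-- Adding `ab` can only merge the component of `a` with another one. -/
lemma numComponents_le_numComponents_insert_add_one [Finite V] (A : Set (Sym2 V))
    (w : Sym2 V) : numComponents A ≤ numComponents (insert w A) + 1 := by
  classical
  induction w using Sym2.ind with
  | _ a b =>
  set G := fromEdgeSet A
  set G' := fromEdgeSet (insert s(a, b) A)
  let f : G.ConnectedComponent → G'.ConnectedComponent ⊕ Unit := fun c =>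
    if c = G.connectedComponentMk a then .inr () else .inl (c.map (.ofLE (fromEdgeSet_mono
      (Set.subset_insert _ _))))
  have hf : Function.Injective f := by
    intro c₁ c₂ hc
    by_cases h₁ : c₁ = G.connectedComponentMk a <;> by_cases h₂ : c₂ = G.connectedComponentMk a <;>
      simp only [f, h₁, h₂, if_true, if_false, reduceCtorEq, Sum.inl.injEq] at hc
    · rw [h₁, h₂]
    induction c₁ using ConnectedComponent.ind with | _ x =>
    induction c₂ using ConnectedComponent.ind with | _ y =>
    rcases reachable_or_of_reachable_insert (ConnectedComponent.exact hc) with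
      h | ⟨h, -⟩ | ⟨-, h⟩
    · exact ConnectedComponent.sound h
    · exact absurd (ConnectedComponent.sound h) h₁
    · exact absurd (ConnectedComponent.sound h).symm h₂
  simpa [numComponents, Nat.card_sum] using Nat.card_le_card_of_injective f hf

lemma graphRank_le_card [Fintype V] [DecidableEq V] (S : Finset (Sym2 V)) :
    graphRank (S : Set (Sym2 V)) ≤ S.card := by
  induction S using Finset.induction_on with
  | empty => simp [graphRank_eq_card_sub, numComponents_empty]
  | @insert w S hw ih =>
    have h₁ := numComponents_le_numComponents_insert_add_one (S : Set (Sym2 V)) w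
    have h₂ := numComponents_le_card (S : Set (Sym2 V))
    rw [graphRank_eq_card_sub] at ih ⊢
    rw [Finset.coe_insert, Finset.card_insert_of_notMem hw]
    omega

lemma reachable_apply_of_adj {G : SimpleGraph V} {H : SimpleGraph W} (f : V → W)
    (hf : ∀ x y, G.Adj x y → H.Reachable (f x) (f y)) {x y : V} (h : G.Reachable x y) :
    H.Reachable (f x) (f y) := by
  rw [reachable_iff_reflTransGen] at h ⊢
  exact ReflTransGen.lift' f (fun a b hab => (reachable_iff_reflTransGen _ _).1 (hf a b hab)) _ _ h

lemma card_connectedComponent_eq {G : SimpleGraph V} {H : SimpleGraph W} (f : V → W) (g : W → V)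
    (hf : ∀ x y, G.Adj x y → H.Reachable (f x) (f y))
    (hg : ∀ x y, H.Adj x y → G.Reachable (g x) (g y))
    (hgf : ∀ x, G.Reachable (g (f x)) x) (hfg : ∀ y, f (g y) = y) :
    Nat.card G.ConnectedComponent = Nat.card H.ConnectedComponent :=
  Nat.card_congr
    { toFun := Quot.lift (fun x => H.connectedComponentMk (f x))
        fun _ _ h => ConnectedComponent.sound (reachable_apply_of_adj f hf h)
      invFun := Quot.lift (fun y => G.connectedComponentMk (g y))
        fun _ _ h => ConnectedComponent.sound (reachable_apply_of_adj g hg h)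
      left_inv := fun c => c.ind fun x => ConnectedComponent.sound (hgf x)
      right_inv := fun c => c.ind fun y => congrArg _ (hfg y) }
end Components

section Contraction

variable [DecidableEq V] {u v : V}

def contractMap (huv : u ≠ v) (x : V) : {x : V // x ≠ v} :=
  if h : x = v then ⟨u, huv⟩ else ⟨x, h⟩

lemma contractMap_of_ne (huv : u ≠ v) {x : V} (hx : x ≠ v) : contractMap huv x = ⟨x, hx⟩ :=
  dif_neg hx

@[simp] lemma contractMap_right (huv : u ≠ v) : contractMap huv v = ⟨u, huv⟩ := dif_pos rfl

@[simp] lemma contractMap_left (huv : u ≠ v) : contractMap huv u = ⟨u, huv⟩ :=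
  contractMap_of_ne huv huv

@[simp] lemma contractMap_coe (huv : u ≠ v) (a : {x : V // x ≠ v}) : contractMap huv a = a :=
  contractMap_of_ne huv a.2

lemma contractMap_eq_iff (huv : u ≠ v) {x : V} (a : {x : V // x ≠ v}) :
    contractMap huv x = a ↔ x = a ∨ (x = v ∧ (a : V) = u) := by
  by_cases hx : x = v
  · subst hx
    simp [a.2.symm, Subtype.ext_iff, eq_comm]
  · simp [contractMap_of_ne huv hx, hx, Subtype.ext_iff]

lemma eq_or_of_contractMap_eq (huv : u ≠ v) {x y : V} (h : contractMap huv x = contractMap huv y) :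
    x = y ∨ s(x, y) = s(u, v) := by
  by_cases hx : x = v <;> by_cases hy : y = v
  · exact Or.inl (hx.trans hy.symm)
  · subst hx
    rw [contractMap_right, contractMap_of_ne huv hy, Subtype.mk.injEq] at h
    exact Or.inr (h ▸ Sym2.eq_swap)
  · subst hy
    rw [contractMap_right, contractMap_of_ne huv hx, Subtype.mk.injEq] at h
    exact Or.inr (h ▸ rfl)
  · rw [contractMap_of_ne huv hx, contractMap_of_ne huv hy, Subtype.mk.injEq] at h
    exact Or.inl h

/-- The contraction `G / uv` on the vertex set `V \ {v}`; parallel edges are merged. -/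
noncomputable def contractEdge (G : SimpleGraph V) (huv : u ≠ v) : SimpleGraph {x : V // x ≠ v} :=
  fromEdgeSet (Sym2.map (contractMap huv) '' (G.deleteEdges {s(u, v)}).edgeSet)

lemma contractEdge_adj {G : SimpleGraph V} (huv : u ≠ v) {a b : {x : V // x ≠ v}} :
    (contractEdge G huv).Adj a b ↔
      a ≠ b ∧
        Relation.Map (G.deleteEdges {s(u, v)}).Adj (contractMap huv) (contractMap huv) a b := by
  rw [contractEdge, fromEdgeSet_adj, and_comm]
  refine and_congr_right fun _ => ⟨?_, ?_⟩
  · rintro ⟨w, hw, hwe⟩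
    induction w using Sym2.ind with | _ x y =>
    rw [Sym2.map_mk, Sym2.eq_iff] at hwe
    rcases hwe with ⟨rfl, rfl⟩ | ⟨rfl, rfl⟩
    · exact ⟨x, y, hw, rfl, rfl⟩
    · exact ⟨y, x, (G.deleteEdges _).adj_symm hw, rfl, rfl⟩
  · rintro ⟨x, y, hxy, rfl, rfl⟩
    exact ⟨s(x, y), hxy, rfl⟩

lemma numComponents_insert_eq (huv : u ≠ v) (A : Set (Sym2 V)) :
    numComponents (insert s(u, v) A) = numComponents (Sym2.map (contractMap huv) '' A) := by
  have hcoe : ∀ x, (fromEdgeSet (insert s(u, v) A)).Reachable (contractMap huv x) x := by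
    intro x
    by_cases hx : x = v
    · subst hx
      rw [contractMap_right]
      exact Adj.reachable <| (fromEdgeSet_adj _).2 ⟨Set.mem_insert _ _, huv⟩
    · rw [contractMap_of_ne huv hx]
  refine card_connectedComponent_eq (contractMap huv) Subtype.val ?_ ?_ hcoe (contractMap_coe huv)
  · intro x y hxy
    obtain ⟨he | he, -⟩ := (fromEdgeSet_adj _).1 hxy
    · rcases Sym2.eq_iff.1 he with ⟨rfl, rfl⟩ | ⟨rfl, rfl⟩ <;> simp
    · by_cases hp : contractMap huv x = contractMap huv y
      · rw [hp]
      · exact Adj.reachable <| (fromEdgeSet_adj _).2 ⟨⟨s(x, y), he, rfl⟩, hp⟩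
  · intro a b hab
    obtain ⟨⟨w, hw, hwe⟩, -⟩ := (fromEdgeSet_adj _).1 hab
    induction w using Sym2.ind with | _ x y =>
    have hxy : (fromEdgeSet (insert s(u, v) A)).Reachable x y := by
      by_cases h : x = y
      · rw [h]
      · exact Adj.reachable <| (fromEdgeSet_adj _).2 ⟨Set.mem_insert_of_mem _ hw, h⟩
    rw [Sym2.map_mk, Sym2.eq_iff] at hwe
    rcases hwe with ⟨rfl, rfl⟩ | ⟨rfl, rfl⟩
    · exact (hcoe x).trans (hxy.trans (hcoe y).symm)
    · exact (hcoe y).trans (hxy.symm.trans (hcoe x).symm)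

lemma card_subtype_ne_add_one [Fintype V] (v : V) :
    Fintype.card {x // x ≠ v} + 1 = Fintype.card V := by
  have : 0 < Fintype.card V := Fintype.card_pos_iff.2 ⟨v⟩
  simp only [Fintype.card_subtype_compl, Fintype.card_unique]
  omega

lemma graphRank_insert_eq [Fintype V] (huv : u ≠ v) (A : Set (Sym2 V)) :
    graphRank (insert s(u, v) A) = graphRank (Sym2.map (contractMap huv) '' A) + 1 := by
  have := numComponents_le_card (Sym2.map (contractMap huv) '' A)
  rw [graphRank_eq_card_sub, graphRank_eq_card_sub, numComponents_insert_eq huv,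
    ← card_subtype_ne_add_one v]
  omega

end Contraction

noncomputable def finEdges [Finite V] (G : SimpleGraph V) : Finset (Sym2 V) :=
  (Set.toFinite G.edgeSet).toFinset

@[simp] lemma mem_finEdges [Finite V] {G : SimpleGraph V} {e : Sym2 V} :
    e ∈ finEdges G ↔ e ∈ G.edgeSet :=
  Set.Finite.mem_toFinset _

lemma finEdges_eq_edgeFinset [Finite V] (G : SimpleGraph V) [Fintype G.edgeSet] :
    finEdges G = G.edgeFinset := by
  ext; simp

lemma finEdges_deleteEdges [Finite V] [DecidableEq V] (G : SimpleGraph V) (e : Sym2 V) :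
    finEdges (G.deleteEdges {e}) = (finEdges G).erase e := by
  ext; simp [and_comm]

lemma finEdges_contractEdge [Finite V] [DecidableEq V] {G : SimpleGraph V} {u v : V}
    (h : G.Adj u v) :
    finEdges (contractEdge G h.ne) =
      ((finEdges G).erase s(u, v)).image (Sym2.map (contractMap h.ne)) := by
  ext w
  simp only [mem_finEdges, contractEdge, edgeSet_fromEdgeSet, edgeSet_deleteEdges, Finset.mem_image,
    Finset.mem_erase, Set.mem_sdiff, Set.mem_image, Set.mem_singleton_iff, Sym2.mem_diagSet]
  refine ⟨fun ⟨hw, _⟩ => by simpa only [and_comm] using hw, ?_⟩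
  rintro ⟨w, ⟨hne, hw⟩, rfl⟩
  refine ⟨⟨w, ⟨hw, hne⟩, rfl⟩, ?_⟩
  induction w using Sym2.ind with | _ x y =>
  rw [Sym2.map_mk, Sym2.mk_isDiag_iff]
  intro hxy
  rcases eq_or_of_contractMap_eq h.ne hxy with rfl | he
  · exact G.loopless.irrefl x hw
  · exact hne he

/-- Strong induction on `S`: summed over all `T ⊆ S`, both sides give `[S = ∅]`. -/
lemma sum_neg_one_pow_card_filter_image_eq {β γ : Type*} [DecidableEq β] [DecidableEq γ]
    (E : Finset β) (ψ : β → γ) (S : Finset γ) (hS : S ⊆ E.image ψ) :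
    ∑ A ∈ E.powerset with A.image ψ = S, (-1 : ℤ) ^ A.card = (-1) ^ S.card := by
  induction S using Finset.strongInduction with
  | _ S ih =>
  set ES := E.filter (fun x => ψ x ∈ S)
  have hfib : ∀ T ∈ S.powerset, E.powerset.filter (fun A => A.image ψ = T) =
      ES.powerset.filter (fun A => A.image ψ = T) := by
    intro T hT
    ext A
    simp only [Finset.mem_filter, Finset.mem_powerset, ES, Finset.subset_iff]
    constructor
    · rintro ⟨hA, rfl⟩
      exact ⟨fun x hx => ⟨hA hx, Finset.mem_powerset.1 hT (Finset.mem_image_of_mem _ hx)⟩, rfl⟩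
    · rintro ⟨hA, rfl⟩
      exact ⟨fun x hx => (hA hx).1, rfl⟩
  have htotal : ∑ T ∈ S.powerset, ∑ A ∈ E.powerset with A.image ψ = T, (-1 : ℤ) ^ A.card =
      ∑ T ∈ S.powerset, (-1 : ℤ) ^ T.card := by
    rw [Finset.sum_congr rfl fun T hT => by rw [hfib T hT], Finset.sum_fiberwise_of_maps_to,
      Finset.sum_powerset_neg_one_pow_card, Finset.sum_powerset_neg_one_pow_card]
    · congr 1
      simp only [Finset.filter_eq_empty_iff, ES, eq_iff_iff]
      constructor
      · intro h
        by_contra hne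
        obtain ⟨s, hs⟩ := Finset.nonempty_iff_ne_empty.2 hne
        obtain ⟨x, hx, rfl⟩ := Finset.mem_image.1 (hS hs)
        exact h hx hs
      · rintro rfl x _ hx
        exact Finset.notMem_empty _ hx
    · intro A hA
      rw [Finset.mem_powerset] at hA ⊢
      intro t ht
      obtain ⟨x, hx, rfl⟩ := Finset.mem_image.1 ht
      exact (Finset.mem_filter.1 (hA hx)).2
  rw [← Finset.insert_erase (Finset.mem_powerset_self S),
    Finset.sum_insert (Finset.notMem_erase _ _), Finset.sum_insert (Finset.notMem_erase _ _),
    Finset.sum_congr rfl fun T hT => ih T ?_ ?_] at htotal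
  · exact add_right_cancel htotal
  · obtain ⟨hne, hT⟩ := Finset.mem_erase.1 hT
    exact Finset.ssubset_iff_subset_ne.2 ⟨Finset.mem_powerset.1 hT, hne⟩
  · exact (Finset.mem_powerset.1 (Finset.mem_of_mem_erase hT)).trans hS

lemma sum_powerset_neg_one_pow_mul_image {β γ : Type*} [DecidableEq β] [DecidableEq γ]
    (E : Finset β) (ψ : β → γ) (F : Finset γ → ℤ) :
    ∑ A ∈ E.powerset, (-1 : ℤ) ^ A.card * F (A.image ψ) =
      ∑ S ∈ (E.image ψ).powerset, (-1 : ℤ) ^ S.card * F S := by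
  rw [← Finset.sum_fiberwise_of_maps_to (g := fun A => A.image ψ) (t := (E.image ψ).powerset)
    fun A hA => Finset.mem_powerset.2 (Finset.image_subset_image (Finset.mem_powerset.1 hA))]
  refine Finset.sum_congr rfl fun S hS => ?_
  rw [Finset.sum_congr rfl fun A hA => by rw [(Finset.mem_filter.1 hA).2], ← Finset.sum_mul,
    sum_neg_one_pow_card_filter_image_eq E ψ S (Finset.mem_powerset.1 hS)]

section SignedSum

variable [Fintype V]

/-- The exponent `|A| + r(A)` has the parity of `|A| - r(A)` but avoids truncated subtraction. -/
noncomputable def signedSum (w : ℕ → ℤ) (G : SimpleGraph V) : ℤ :=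
  ∑ A ∈ (finEdges G).powerset,
    w (numComponents (A : Set (Sym2 V))) * (-1) ^ (A.card + graphRank (A : Set (Sym2 V)))

lemma signedSum_bot (w : ℕ → ℤ) : signedSum w (⊥ : SimpleGraph V) = w (Fintype.card V) := by
  have : finEdges (⊥ : SimpleGraph V) = ∅ := by ext; simp
  simp [signedSum, this, graphRank_eq_card_sub, numComponents_empty]

lemma signedSum_eq_deleteEdges_add_contractEdge [DecidableEq V] (w : ℕ → ℤ) {G : SimpleGraph V}
    {u v : V} (h : G.Adj u v) :
    signedSum w G = signedSum w (G.deleteEdges {s(u, v)}) + signedSum w (contractEdge G h.ne) := by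
  set p := contractMap h.ne
  have he : s(u, v) ∈ finEdges G := mem_finEdges.2 h
  rw [signedSum, ← Finset.insert_erase he, Finset.sum_powerset_insert (Finset.notMem_erase _ _),
    signedSum, finEdges_deleteEdges]
  congr 1
  calc _ = ∑ A ∈ ((finEdges G).erase s(u, v)).powerset, (-1 : ℤ) ^ A.card *
        (w (numComponents ((A.image (Sym2.map p) : Finset _) : Set (Sym2 {x // x ≠ v}))) *
          (-1) ^ graphRank ((A.image (Sym2.map p) : Finset _) : Set (Sym2 {x // x ≠ v}))) := by
        refine Finset.sum_congr rfl fun A hA => ?_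
        have hA : s(u, v) ∉ A := fun hc => Finset.notMem_erase _ _ (Finset.mem_powerset.1 hA hc)
        rw [Finset.coe_insert, Finset.coe_image, Finset.card_insert_of_notMem hA,
          numComponents_insert_eq h.ne, graphRank_insert_eq h.ne]
        ring
    _ = signedSum w (contractEdge G h.ne) := by
        rw [sum_powerset_neg_one_pow_mul_image _ (Sym2.map p) fun S =>
          w (numComponents (S : Set (Sym2 {x // x ≠ v}))) *
            (-1) ^ graphRank (S : Set (Sym2 {x // x ≠ v})),
          signedSum, finEdges_contractEdge h]
        refine Finset.sum_congr rfl fun S _ => ?_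
        ring

lemma neg_one_pow_sub_eq_add {a b : ℕ} (h : b ≤ a) : (-1 : ℤ) ^ (a - b) = (-1) ^ (a + b) := by
  obtain ⟨c, rfl⟩ := Nat.exists_eq_add_of_le h
  rw [Nat.add_sub_cancel_left, show b + c + b = c + 2 * b by ring, pow_add, pow_mul]
  simp

lemma tutte_two_zero [DecidableEq V] (G : SimpleGraph V) [DecidableRel G.Adj] :
    tutte G 2 0 = signedSum (fun _ => 1) G := by
  rw [tutte, signedSum, ← finEdges_eq_edgeFinset]
  refine Finset.sum_congr rfl fun A _ => ?_
  rw [← neg_one_pow_sub_eq_add (graphRank_le_card A)]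
  norm_num

lemma tutte_one_zero [DecidableEq V] {G : SimpleGraph V} [DecidableRel G.Adj] (hG : G.Connected) :
    tutte G 1 0 = signedSum (fun c => if c = 1 then 1 else 0) G := by
  have : Nonempty V := hG.nonempty
  rw [tutte, signedSum, ← finEdges_eq_edgeFinset]
  refine Finset.sum_congr rfl fun A _ => ?_
  have h₁ := numComponents_pos (A : Set (Sym2 V))
  have h₂ := numComponents_le_card (A : Set (Sym2 V))
  rw [← neg_one_pow_sub_eq_add (graphRank_le_card A), graphRank_eq_card_sub G.edgeSet,
    graphRank_eq_card_sub,
    numComponents_edgeSet_of_connected hG,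
    show Fintype.card V - 1 - (Fintype.card V - numComponents (A : Set (Sym2 V))) =
      numComponents (A : Set (Sym2 V)) - 1 by omega]
  rcases eq_or_ne (numComponents (A : Set (Sym2 V))) 1 with hc | hc
  · simp [hc]
  · rw [if_neg hc, sub_self, zero_pow (by omega)]
    simp

end SignedSum

lemma _root_.Set.BijOn.ncard_sep {α β : Type*} {f : α → β} {s : Set α} {t : Set β}
    (h : Set.BijOn f s t) (P : β → Prop) :
    {x | x ∈ s ∧ P (f x)}.ncard = {y | y ∈ t ∧ P y}.ncard := by
  refine Set.BijOn.ncard_eq ⟨fun x hx => ⟨h.mapsTo hx.1, hx.2⟩,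
    h.injOn.mono fun x hx => hx.1, fun y hy => ?_⟩
  obtain ⟨x, hx, rfl⟩ := h.surjOn hy.1
  exact ⟨x, ⟨hx, hy.2⟩, rfl⟩

section Orientations

variable {G : SimpleGraph V} {r : V → V → Prop} {u v q : V}

lemma IsAcyclicRel.asymm (hr : IsAcyclicRel r) {x y : V} (h : r x y) : ¬ r y x :=
  fun h' => hr x (.tail (.single h) h')

lemma IsAcyclicRel.mono {r' : V → V → Prop} (hr : IsAcyclicRel r) (h : ∀ x y, r' x y → r x y) :
    IsAcyclicRel r' :=
  fun x hx => hr x (TransGen.mono h _ _ hx)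

lemma mem_acyc_iff : r ∈ Acyc G ↔ (∀ x y, G.Adj x y ↔ r x y ∨ r y x) ∧ IsAcyclicRel r :=
  ⟨fun h => ⟨h.1.1, h.2⟩, fun h => ⟨⟨h.1, fun _ _ => h.2.asymm⟩, h.2⟩⟩

lemma adj_of_mem_acyc (hr : r ∈ Acyc G) {x y : V} (h : r x y) : G.Adj x y :=
  (hr.1.1 x y).2 (Or.inl h)

lemma not_transGen_of_isSource (hq : IsSource r q) (x : V) : ¬ TransGen r x q := by
  intro h
  obtain ⟨y, -, hy⟩ := TransGen.tail'_iff.1 h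
  exact hq y hy

lemma exists_isSource_reflTransGen [Finite V] (hr : IsAcyclicRel r) (x : V) :
    ∃ z, IsSource r z ∧ ReflTransGen r z x := by
  have : Std.Irrefl (TransGen r) := ⟨hr⟩
  obtain ⟨z, hz, hmin⟩ := (Finite.wellFounded_of_trans_of_irrefl (TransGen r)).has_min
    {z | ReflTransGen r z x} ⟨x, .refl⟩
  exact ⟨z, fun j hj => hmin j (.head hj hz) (.single hj), hz⟩

def sources (r : V → V → Prop) : Set V := {x | IsSource r x}

lemma isSource_of_sources_eq {s : Set V} (h : sources r = s) {x : V} (hx : x ∈ s) :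
    IsSource r x := by
  rw [← h] at hx
  exact hx

def eraseEdge (e : Sym2 V) (r : V → V → Prop) : V → V → Prop := fun x y => r x y ∧ s(x, y) ≠ e

def addArc (u v : V) (r : V → V → Prop) : V → V → Prop := fun x y => r x y ∨ (x = u ∧ y = v)

lemma transGen_addArc {x y : V} (h : TransGen (addArc u v r) x y) :
    TransGen r x y ∨ (ReflTransGen r x u ∧ ReflTransGen r v y) := by
  induction h with
  | single h =>
    rcases h with h | ⟨rfl, rfl⟩
    · exact Or.inl (.single h)
    · exact Or.inr ⟨.refl, .refl⟩
  | tail _ h ih =>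
    rcases h with h | ⟨rfl, rfl⟩
    · rcases ih with ih | ⟨ih₁, ih₂⟩
      · exact Or.inl (ih.tail h)
      · exact Or.inr ⟨ih₁, ih₂.tail h⟩
    · rcases ih with ih | ⟨ih₁, -⟩
      · exact Or.inr ⟨ih.to_reflTransGen, .refl⟩
      · exact Or.inr ⟨ih₁, .refl⟩

lemma isAcyclicRel_addArc (hr : IsAcyclicRel r) (huv : u ≠ v) (hvu : ¬ TransGen r v u) :
    IsAcyclicRel (addArc u v r) := by
  intro x hx
  rcases transGen_addArc hx with h | ⟨h₁, h₂⟩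
  · exact hr x h
  · rcases reflTransGen_iff_eq_or_transGen.1 (h₂.trans h₁) with h | h
    · exact huv h
    · exact hvu h

lemma eraseEdge_mem_acyc (hr : r ∈ Acyc G) (e : Sym2 V) :
    eraseEdge e r ∈ Acyc (G.deleteEdges {e}) := by
  refine mem_acyc_iff.2 ⟨fun x y => ?_, hr.2.mono fun _ _ h => h.1⟩
  rw [deleteEdges_adj, hr.1.1 x y]
  simp only [eraseEdge, Set.mem_singleton_iff, Sym2.eq_swap (a := y)]
  tauto

lemma addArc_mem_acyc (h : G.Adj u v) (hr : r ∈ Acyc (G.deleteEdges {s(u, v)}))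
    (hvu : ¬ TransGen r v u) : addArc u v r ∈ Acyc G := by
  refine mem_acyc_iff.2 ⟨fun x y => ?_, isAcyclicRel_addArc hr.2 h.ne hvu⟩
  by_cases he : s(x, y) = s(u, v)
  · rcases Sym2.eq_iff.1 he with ⟨rfl, rfl⟩ | ⟨rfl, rfl⟩
    · simp [addArc, h]
    · simp [addArc, h.symm]
  · have hadj : G.Adj x y ↔ (G.deleteEdges {s(u, v)}).Adj x y := by simp [he]
    rw [hadj, hr.1.1 x y]
    simp only [addArc]
    constructor
    · tauto
    · rintro ((hxy | ⟨rfl, rfl⟩) | (hxy | ⟨rfl, rfl⟩))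
      · exact Or.inl hxy
      · exact absurd rfl he
      · exact Or.inr hxy
      · exact absurd Sym2.eq_swap he

lemma bijOn_eraseEdge (h : G.Adj u v) :
    Set.BijOn (eraseEdge s(u, v)) {r | r ∈ Acyc G ∧ r u v}
      {r | r ∈ Acyc (G.deleteEdges {s(u, v)}) ∧ ¬ TransGen r v u} := by
  refine Set.InvOn.bijOn (f' := addArc u v) ⟨?_, ?_⟩ ?_ ?_
  · rintro r ⟨hr, huv⟩
    funext x y
    refine propext ⟨?_, fun hxy => ?_⟩
    · rintro (⟨hxy, -⟩ | ⟨rfl, rfl⟩)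
      exacts [hxy, huv]
    · by_cases he : s(x, y) = s(u, v)
      · rcases Sym2.eq_iff.1 he with ⟨rfl, rfl⟩ | ⟨rfl, rfl⟩
        · exact Or.inr ⟨rfl, rfl⟩
        · exact absurd hxy (hr.2.asymm huv)
      · exact Or.inl ⟨hxy, he⟩
  · rintro r ⟨hr, -⟩
    funext x y
    refine propext ⟨?_, fun hxy => ⟨Or.inl hxy, fun he => ?_⟩⟩
    · rintro ⟨hxy | ⟨rfl, rfl⟩, hne⟩
      exacts [hxy, absurd rfl hne]
    · simpa [he] using adj_of_mem_acyc hr hxy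
  · rintro r ⟨hr, huv⟩
    exact ⟨eraseEdge_mem_acyc hr _,
      fun hvu => hr.2 u (.head huv (TransGen.mono (fun _ _ h => h.1) _ _ hvu))⟩
  · rintro r ⟨hr, hvu⟩
    exact ⟨addArc_mem_acyc h hr hvu, Or.inr ⟨rfl, rfl⟩⟩

lemma sources_eq_sources_eraseEdge_diff (hr : r ∈ Acyc G) (huv : r u v) :
    sources r = sources (eraseEdge s(u, v) r) \ {v} := by
  ext x
  simp only [sources, IsSource, eraseEdge, Set.mem_sdiff, Set.mem_ofPred_eq, Set.mem_singleton_iff]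
  refine ⟨fun hx => ⟨fun j hj => hx j hj.1, by rintro rfl; exact hx u huv⟩, ?_⟩
  rintro ⟨hx, hxv⟩ j hj
  refine hx j ⟨hj, fun he => ?_⟩
  rcases Sym2.eq_iff.1 he with ⟨rfl, rfl⟩ | ⟨rfl, rfl⟩
  · exact hxv rfl
  · exact hr.2.asymm huv hj

end Orientations

section ContractedOrientations

lemma mem_pair_of_sym2_eq {x y u v : V} (he : s(x, y) = s(u, v)) :
    x ∈ ({u, v} : Set V) ∧ y ∈ ({u, v} : Set V) := by
  rcases Sym2.eq_iff.1 he with ⟨rfl, rfl⟩ | ⟨rfl, rfl⟩ <;> simp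

variable [DecidableEq V] {G : SimpleGraph V} {r : V → V → Prop} {u v : V}

def contractRel (huv : u ≠ v) (r : V → V → Prop) : {x // x ≠ v} → {x // x ≠ v} → Prop :=
  Relation.Map r (contractMap huv) (contractMap huv)

def uncontractRel (G : SimpleGraph V) (huv : u ≠ v) (t : {x // x ≠ v} → {x // x ≠ v} → Prop) :
    V → V → Prop :=
  fun x y => G.Adj x y ∧ t (contractMap huv x) (contractMap huv y)

/-- The second case is a path through the merged vertex. -/
lemma transGen_contractRel (huv : u ≠ v) {a b : {x // x ≠ v}}
    (h : TransGen (contractRel huv r) a b) :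
    ∃ x y, contractMap huv x = a ∧ contractMap huv y = b ∧ (TransGen r x y ∨
      ∃ w ∈ ({u, v} : Set V), ∃ w' ∈ ({u, v} : Set V), TransGen r x w ∧ TransGen r w' y) := by
  induction h with
  | single h =>
    obtain ⟨x, y, hxy, rfl, rfl⟩ := h
    exact ⟨x, y, rfl, rfl, Or.inl (.single hxy)⟩
  | tail _ h ih =>
    obtain ⟨x, y, rfl, hy, ih⟩ := ih
    obtain ⟨y', z, hyz, hy', rfl⟩ := h
    refine ⟨x, z, rfl, rfl, ?_⟩
    rcases eq_or_of_contractMap_eq huv (hy.trans hy'.symm) with rfl | he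
    · rcases ih with ih | ⟨w, hw, w', hw', hxw, hw'y⟩
      · exact Or.inl (ih.tail hyz)
      · exact Or.inr ⟨w, hw, w', hw', hxw, hw'y.tail hyz⟩
    · obtain ⟨hy, hy'⟩ := mem_pair_of_sym2_eq he
      rcases ih with ih | ⟨w, hw, -, -, hxw, -⟩
      · exact Or.inr ⟨y, hy, y', hy', ih, .single hyz⟩
      · exact Or.inr ⟨w, hw, y', hy', hxw, .single hyz⟩

lemma isAcyclicRel_contractRel (huv : u ≠ v) (hr : IsAcyclicRel r) (hnuv : ¬ TransGen r u v)
    (hnvu : ¬ TransGen r v u) : IsAcyclicRel (contractRel huv r) := by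
  have hpair : ∀ w ∈ ({u, v} : Set V), ∀ w' ∈ ({u, v} : Set V), ¬ TransGen r w w' := by
    rintro w (rfl | rfl) w' (rfl | rfl) <;> first | exact hr _ | assumption
  intro a ha
  obtain ⟨x, y, hx, hy, h⟩ := transGen_contractRel huv ha
  rcases eq_or_of_contractMap_eq huv (hx.trans hy.symm) with rfl | he
  · rcases h with h | ⟨w, hw, w', hw', hxw, hw'x⟩
    · exact hr x h
    · exact hpair w' hw' w hw (hw'x.trans hxw)
  · obtain ⟨hx, hy⟩ := mem_pair_of_sym2_eq he
    rcases h with h | ⟨w, hw, -, -, hxw, -⟩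
    · exact hpair x hx y hy h
    · exact hpair x hx w hw hxw

lemma isSource_contractRel_iff (huv : u ≠ v) {a : {x // x ≠ v}} :
    IsSource (contractRel huv r) a ↔ ∀ x, contractMap huv x = a → IsSource r x := by
  constructor
  · rintro ha x rfl j hj
    exact ha _ ⟨j, x, hj, rfl, rfl⟩
  · rintro ha b ⟨j, x, hj, -, rfl⟩
    exact ha x rfl j hj

lemma sources_contractRel_eq_singleton_iff (huv : u ≠ v) :
    sources (contractRel huv r) = {⟨u, huv⟩} ↔ sources r = {u, v} := by
  simp only [Set.ext_iff, sources, Set.mem_ofPred_eq, isSource_contractRel_iff,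
    Set.mem_singleton_iff, Set.mem_insert_iff, contractMap_eq_iff]
  constructor
  · intro H x
    refine ⟨fun hx => ?_, fun hx => (H ⟨u, huv⟩).2 rfl x (by simpa using hx)⟩
    by_contra hne
    push Not at hne
    have := (H ⟨x, hne.2⟩).1 fun y hy => by
      rcases hy with rfl | ⟨-, hxu⟩
      exacts [hx, absurd hxu hne.1]
    exact hne.1 (congrArg Subtype.val this)
  · intro H a
    refine ⟨fun ha => Subtype.ext ?_, ?_⟩
    · simpa [a.2] using (H a).1 (ha a (Or.inl rfl))
    · rintro rfl x hx
      exact (H x).2 (by simpa [or_comm, eq_comm] using hx)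

lemma contractMap_ne_of_adj (huv : u ≠ v) {x y : V} (hxy : (G.deleteEdges {s(u, v)}).Adj x y) :
    contractMap huv x ≠ contractMap huv y := fun hp => by
  rcases eq_or_of_contractMap_eq huv hp with rfl | he
  · exact hxy.ne rfl
  · simp [he] at hxy

lemma contractRel_mem_acyc (h : G.Adj u v) (hr : r ∈ Acyc (G.deleteEdges {s(u, v)}))
    (hnuv : ¬ TransGen r u v) (hnvu : ¬ TransGen r v u) :
    contractRel h.ne r ∈ Acyc (contractEdge G h.ne) := by
  refine mem_acyc_iff.2 ⟨fun a b => ?_, isAcyclicRel_contractRel h.ne hr.2 hnuv hnvu⟩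
  rw [contractEdge_adj]
  constructor
  · rintro ⟨-, x, y, hxy, rfl, rfl⟩
    rcases (hr.1.1 x y).1 hxy with h' | h'
    · exact Or.inl ⟨x, y, h', rfl, rfl⟩
    · exact Or.inr ⟨y, x, h', rfl, rfl⟩
  · rintro (⟨x, y, hxy, rfl, rfl⟩ | ⟨x, y, hxy, rfl, rfl⟩) <;>
      have hxy := adj_of_mem_acyc hr hxy
    · exact ⟨contractMap_ne_of_adj h.ne hxy, x, y, hxy, rfl, rfl⟩
    · exact ⟨(contractMap_ne_of_adj h.ne hxy).symm, y, x, hxy.symm, rfl, rfl⟩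

lemma uncontractRel_mem_acyc (h : G.Adj u v) {t : {x // x ≠ v} → {x // x ≠ v} → Prop}
    (ht : t ∈ Acyc (contractEdge G h.ne)) :
    uncontractRel (G.deleteEdges {s(u, v)}) h.ne t ∈ Acyc (G.deleteEdges {s(u, v)}) ∧
      ¬ TransGen (uncontractRel (G.deleteEdges {s(u, v)}) h.ne t) u v ∧
      ¬ TransGen (uncontractRel (G.deleteEdges {s(u, v)}) h.ne t) v u := by
  have hlift {x y : V} (hxy : TransGen (uncontractRel (G.deleteEdges {s(u, v)}) h.ne t) x y) :
      TransGen t (contractMap h.ne x) (contractMap h.ne y) :=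
    TransGen.lift _ (fun _ _ h => h.2) _ _ hxy
  refine ⟨mem_acyc_iff.2 ⟨fun x y => ⟨fun hxy => ?_, ?_⟩, fun x hx => ht.2 _ (hlift hx)⟩,
    fun huv => ht.2 ⟨u, h.ne⟩ ?_, fun hvu => ht.2 ⟨u, h.ne⟩ ?_⟩
  · have := (contractEdge_adj h.ne).2 ⟨contractMap_ne_of_adj h.ne hxy, x, y, hxy, rfl, rfl⟩
    rcases (ht.1.1 _ _).1 this with h' | h'
    · exact Or.inl ⟨hxy, h'⟩
    · exact Or.inr ⟨hxy.symm, h'⟩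
  · rintro (⟨hxy, -⟩ | ⟨hxy, -⟩)
    exacts [hxy, hxy.symm]
  · simpa using hlift huv
  · simpa using hlift hvu

lemma bijOn_contractRel (h : G.Adj u v) :
    Set.BijOn (contractRel h.ne)
      {r | r ∈ Acyc (G.deleteEdges {s(u, v)}) ∧ ¬ TransGen r u v ∧ ¬ TransGen r v u}
      (Acyc (contractEdge G h.ne)) := by
  refine Set.InvOn.bijOn (f' := uncontractRel (G.deleteEdges {s(u, v)}) h.ne) ⟨?_, ?_⟩
    (fun r ⟨hr, hnuv, hnvu⟩ => contractRel_mem_acyc h hr hnuv hnvu)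
    (fun t ht => uncontractRel_mem_acyc h ht)
  · rintro r ⟨hr, hnuv, hnvu⟩
    funext x y
    refine propext ⟨fun ⟨hxy, hc⟩ => ?_, fun hxy => ⟨adj_of_mem_acyc hr hxy, x, y, hxy, rfl, rfl⟩⟩
    refine ((hr.1.1 x y).1 hxy).resolve_right fun hyx => ?_
    exact (isAcyclicRel_contractRel h.ne hr.2 hnuv hnvu).asymm hc ⟨y, x, hyx, rfl, rfl⟩
  · intro t ht
    funext a b
    refine propext ⟨?_, fun hab => ?_⟩
    · rintro ⟨x, y, ⟨-, hxy⟩, rfl, rfl⟩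
      exact hxy
    · obtain ⟨-, x, y, hxy, rfl, rfl⟩ := (contractEdge_adj h.ne).1 (adj_of_mem_acyc ht hab)
      exact ⟨x, y, ⟨hxy, hab⟩, rfl, rfl⟩

end ContractedOrientations

section Counting

variable {G : SimpleGraph V} {u v q : V}

def acycUniqueSource (G : SimpleGraph V) (q : V) : Set (V → V → Prop) :=
  {r | r ∈ Acyc G ∧ sources r = {q}}

lemma acyc_bot : Acyc (⊥ : SimpleGraph V) = {fun _ _ => False} := by
  ext r
  refine ⟨fun hr => ?_, ?_⟩
  · funext x y
    exact propext ⟨fun h => (hr.1.1 x y).2 (Or.inl h), False.elim⟩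
  · rintro rfl
    exact mem_acyc_iff.2
      ⟨fun _ _ => by simp, fun _ h => (TransGen.head'_iff.1 h).elim fun _ h => h.1⟩

lemma ncard_acycUniqueSource_bot [Fintype V] (q : V) :
    (acycUniqueSource (⊥ : SimpleGraph V) q).ncard = if Fintype.card V = 1 then 1 else 0 := by
  have hsrc : sources (fun _ _ : V => False) = Set.univ := by
    ext; simp [sources, IsSource]
  have hiff : Set.univ = ({q} : Set V) ↔ Fintype.card V = 1 := by
    rw [Set.eq_singleton_iff_unique_mem, Fintype.card_eq_one_iff]
    exact ⟨fun h => ⟨q, fun x => h.2 x trivial⟩,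
      fun ⟨a, ha⟩ => ⟨trivial, fun x _ => (ha x).trans (ha q).symm⟩⟩
  unfold acycUniqueSource
  rw [acyc_bot]
  split_ifs with hV
  · rw [← Set.ncard_singleton (fun _ _ : V => False)]
    congr 1
    ext r
    simp only [Set.mem_ofPred_eq, Set.mem_singleton_iff, and_iff_left_iff_imp]
    rintro rfl
    rw [hsrc, hiff]
    exact hV
  · convert Set.ncard_empty (V → V → Prop)
    refine Set.eq_empty_iff_forall_notMem.2 ?_
    rintro r ⟨rfl, hs⟩
    exact hV (hiff.1 (hsrc ▸ hs))

lemma exists_isSource_rel [Finite V] {r : V → V → Prop} (hr : IsAcyclicRel r) {x y : V}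
    (hxy : r x y) : ∃ z w, IsSource r z ∧ r z w := by
  obtain ⟨z, hz, hzx⟩ := exists_isSource_reflTransGen hr x
  obtain ⟨w, hzw, -⟩ := TransGen.head'_iff.1 (TransGen.tail' hzx hxy)
  exact ⟨z, w, hz, hzw⟩

lemma acycUniqueSource_eq_empty [Finite V] (hq : ∀ y, ¬ G.Adj q y) (hG : G ≠ ⊥) :
    acycUniqueSource G q = ∅ := by
  obtain ⟨x, y, hxy⟩ := ne_bot_iff_exists_adj.1 hG
  refine Set.eq_empty_iff_forall_notMem.2 fun r ⟨hr, hs⟩ => ?_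
  obtain ⟨a, b, hab⟩ : ∃ a b, r a b := ((hr.1.1 x y).1 hxy).elim (⟨x, y, ·⟩) (⟨y, x, ·⟩)
  obtain ⟨z, w, hz, hzw⟩ := exists_isSource_rel hr.2 hab
  have hzq : z = q := by
    rw [← Set.mem_singleton_iff, ← hs]
    exact hz
  exact hq w (hzq ▸ adj_of_mem_acyc hr hzw)

lemma signedSum_eq_zero_of_isolated [Fintype V] (hq : ∀ y, ¬ G.Adj q y) (hG : G ≠ ⊥) :
    signedSum (fun c => if c = 1 then 1 else 0) G = 0 := by
  obtain ⟨x, y, hxy⟩ := ne_bot_iff_exists_adj.1 hG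
  obtain ⟨z, hz⟩ : ∃ z, q ≠ z := by
    by_cases hx : q = x
    · exact ⟨y, hx ▸ hxy.ne⟩
    · exact ⟨x, hx⟩
  refine Finset.sum_eq_zero fun A hA => ?_
  have hA1 : numComponents (A : Set (Sym2 V)) ≠ 1 := fun hA1 => by
    obtain ⟨w, hw, -⟩ := exists_mem_of_numComponents_eq_one hA1 hz
    exact hq w (mem_finEdges.1 (Finset.mem_powerset.1 hA hw))
  simp [hA1]

lemma sdiff_singleton_eq_singleton_iff {s : Set V} (hqv : q ≠ v) :
    s \ {v} = {q} ↔ s = {q} ∨ s = {q, v} := by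
  constructor
  · intro h
    by_cases hv : v ∈ s
    · right
      rw [← Set.insert_sdiff_self_of_mem hv, h, Set.pair_comm]
    · left
      rwa [Set.sdiff_singleton_eq_self hv] at h
  · rintro (rfl | rfl)
    · exact Set.sdiff_singleton_eq_self hqv.symm
    · ext
      simp only [Set.mem_sdiff, Set.mem_insert_iff, Set.mem_singleton_iff]
      grind

lemma acycUniqueSource_eq_of_adj (h : G.Adj q v) :
    acycUniqueSource G q = {r | r ∈ {r | r ∈ Acyc G ∧ r q v} ∧
      sources (eraseEdge s(q, v) r) \ {v} = {q}} := by
  ext r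
  constructor
  · rintro ⟨hr, hs⟩
    have hqv : r q v := ((hr.1.1 q v).1 h).resolve_right (isSource_of_sources_eq hs rfl v)
    exact ⟨⟨hr, hqv⟩, by rw [← sources_eq_sources_eraseEdge_diff hr hqv, hs]⟩
  · rintro ⟨⟨hr, hqv⟩, hs⟩
    exact ⟨hr, by rw [sources_eq_sources_eraseEdge_diff hr hqv, hs]⟩

variable [DecidableEq V]

lemma ncard_acyc_eq_deleteEdges_add_contractEdge [Finite V] (h : G.Adj u v) :
    (Acyc G).ncard =
      (Acyc (G.deleteEdges {s(u, v)})).ncard + (Acyc (contractEdge G h.ne)).ncard := by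
  set D := Acyc (G.deleteEdges {s(u, v)})
  have hsplit : Acyc G = {r | r ∈ Acyc G ∧ r u v} ∪ {r | r ∈ Acyc G ∧ r v u} := by
    ext r
    refine ⟨fun hr => ((hr.1.1 u v).1 h).imp (⟨hr, ·⟩) (⟨hr, ·⟩), ?_⟩
    rintro (⟨hr, -⟩ | ⟨hr, -⟩) <;> exact hr
  have hdisj : Disjoint {r | r ∈ Acyc G ∧ r u v} {r | r ∈ Acyc G ∧ r v u} :=
    Set.disjoint_left.2 fun r ⟨hr, h₁⟩ ⟨_, h₂⟩ => hr.2.asymm h₁ h₂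
  have hvu := bijOn_eraseEdge h.symm
  rw [Sym2.eq_swap] at hvu
  have hunion : {r | r ∈ D ∧ ¬ TransGen r v u} ∪ {r | r ∈ D ∧ ¬ TransGen r u v} = D := by
    ext r
    refine ⟨by rintro (⟨hr, -⟩ | ⟨hr, -⟩) <;> exact hr, fun hr => ?_⟩
    by_cases hT : TransGen r v u
    · exact Or.inr ⟨hr, fun hT' => hr.2 u (hT'.trans hT)⟩
    · exact Or.inl ⟨hr, hT⟩
  have hinter : {r | r ∈ D ∧ ¬ TransGen r v u} ∩ {r | r ∈ D ∧ ¬ TransGen r u v} =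
      {r | r ∈ D ∧ ¬ TransGen r u v ∧ ¬ TransGen r v u} := by
    ext r
    simp only [Set.mem_inter_iff, Set.mem_ofPred_eq]
    tauto
  rw [hsplit, Set.ncard_union_eq hdisj, (bijOn_eraseEdge h).ncard_eq, hvu.ncard_eq,
    ← Set.ncard_inter_add_ncard_union, hunion, hinter, (bijOn_contractRel h).ncard_eq, add_comm]

/-- With `q` the unique source, `q → v`; after deleting `qv` the sources are `{q}` or `{q, v}`,
and the latter orientations are exactly those whose contraction has unique source `q`. -/
lemma ncard_acycUniqueSource_eq_deleteEdges_add_contractEdge [Finite V] (h : G.Adj q v) :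
    (acycUniqueSource G q).ncard = (acycUniqueSource (G.deleteEdges {s(q, v)}) q).ncard +
      (acycUniqueSource (contractEdge G h.ne) ⟨q, h.ne⟩).ncard := by
  set D := G.deleteEdges {s(q, v)}
  have hD : {r | r ∈ {r | r ∈ Acyc D ∧ ¬ TransGen r v q} ∧ sources r \ {v} = {q}} =
      acycUniqueSource D q ∪ {r | r ∈ Acyc D ∧ sources r = {q, v}} := by
    ext r
    simp only [acycUniqueSource, Set.mem_union, Set.mem_ofPred_eq,
      sdiff_singleton_eq_singleton_iff h.ne]
    constructor
    · rintro ⟨⟨hr, -⟩, hs | hs⟩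
      exacts [Or.inl ⟨hr, hs⟩, Or.inr ⟨hr, hs⟩]
    · rintro (⟨hr, hs⟩ | ⟨hr, hs⟩)
      · exact ⟨⟨hr, not_transGen_of_isSource (isSource_of_sources_eq hs rfl) v⟩, Or.inl hs⟩
      · exact ⟨⟨hr, not_transGen_of_isSource (isSource_of_sources_eq hs (by simp)) v⟩, Or.inr hs⟩
  have hdisj : Disjoint (acycUniqueSource D q) {r | r ∈ Acyc D ∧ sources r = {q, v}} := by
    refine Set.disjoint_left.2 fun r ⟨_, hs⟩ ⟨_, hs'⟩ => h.ne ?_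
    have : v ∈ sources r := by simp [hs']
    simpa [hs, eq_comm] using this
  have hC : {r | r ∈ Acyc D ∧ sources r = {q, v}} = {r | r ∈ {r | r ∈ Acyc D ∧
      ¬ TransGen r q v ∧ ¬ TransGen r v q} ∧ sources (contractRel h.ne r) = {⟨q, h.ne⟩}} := by
    ext r
    simp only [Set.mem_ofPred_eq, sources_contractRel_eq_singleton_iff]
    refine ⟨fun ⟨hr, hs⟩ => ⟨⟨hr, ?_, ?_⟩, hs⟩, fun ⟨⟨hr, _⟩, hs⟩ => ⟨hr, hs⟩⟩
    · exact not_transGen_of_isSource (isSource_of_sources_eq hs (by simp)) q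
    · exact not_transGen_of_isSource (isSource_of_sources_eq hs (by simp)) v
  rw [acycUniqueSource_eq_of_adj h,
    (bijOn_eraseEdge h).ncard_sep fun r => sources r \ {v} = {q}, hD,
    Set.ncard_union_eq hdisj, hC, (bijOn_contractRel h).ncard_sep fun t => sources t = {⟨q, h.ne⟩}]
  rfl

end Counting

section Induction

universe w

lemma ncard_edgeSet_contractEdge_lt [Finite V] [DecidableEq V] {G : SimpleGraph V} {u v : V}
    (h : G.Adj u v) : (contractEdge G h.ne).edgeSet.ncard < G.edgeSet.ncard :=
  calc (contractEdge G h.ne).edgeSet.ncard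
      ≤ (Sym2.map (contractMap h.ne) '' (G.deleteEdges {s(u, v)}).edgeSet).ncard := by
        rw [contractEdge, edgeSet_fromEdgeSet]
        exact Set.ncard_le_ncard Set.sdiff_subset
    _ ≤ (G.deleteEdges {s(u, v)}).edgeSet.ncard := Set.ncard_image_le
    _ < G.edgeSet.ncard := by
        rw [edgeSet_deleteEdges]
        exact Set.ncard_sdiff_singleton_lt_of_mem h

theorem induction_on_deleteEdges_contractEdge
    {P : ∀ (V : Type w) [Fintype V] [DecidableEq V], SimpleGraph V → Prop}
    (bot : ∀ (V : Type w) [Fintype V] [DecidableEq V], P V ⊥)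
    (step : ∀ (V : Type w) [Fintype V] [DecidableEq V] (G : SimpleGraph V), G ≠ ⊥ →
      (∀ u v (h : G.Adj u v), P V (G.deleteEdges {s(u, v)}) ∧ P _ (contractEdge G h.ne)) → P V G)
    (V : Type w) [Fintype V] [DecidableEq V] (G : SimpleGraph V) : P V G := by
  induction hn : G.edgeSet.ncard using Nat.strong_induction_on generalizing V with
  | _ n ih =>
  by_cases hG : G = ⊥
  · subst hG
    exact bot V
  refine step V G hG fun u v h => ⟨ih _ ?_ V _ rfl, ih _ ?_ _ _ rfl⟩
  · rw [← hn, edgeSet_deleteEdges]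
    exact Set.ncard_sdiff_singleton_lt_of_mem h
  · exact hn ▸ ncard_edgeSet_contractEdge_lt h

theorem ncard_acyc_eq_signedSum {V : Type w} [Fintype V] [DecidableEq V] (G : SimpleGraph V) :
    ((Acyc G).ncard : ℤ) = signedSum (fun _ => 1) G := by
  refine induction_on_deleteEdges_contractEdge
    (P := fun V _ _ G => ((Acyc G).ncard : ℤ) = signedSum (fun _ => 1) G) (fun V _ _ => ?_)
    (fun V _ _ G hG ih => ?_) V G
  · rw [acyc_bot, Set.ncard_singleton, signedSum_bot, Nat.cast_one]
  · obtain ⟨u, v, h⟩ := ne_bot_iff_exists_adj.1 hG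
    rw [ncard_acyc_eq_deleteEdges_add_contractEdge h, signedSum_eq_deleteEdges_add_contractEdge _ h,
      Nat.cast_add, (ih u v h).1, (ih u v h).2]

theorem ncard_acycUniqueSource_eq_signedSum {V : Type w} [Fintype V] [DecidableEq V]
    (G : SimpleGraph V) (q : V) :
    ((acycUniqueSource G q).ncard : ℤ) = signedSum (fun c => if c = 1 then 1 else 0) G := by
  refine induction_on_deleteEdges_contractEdge (P := fun V _ _ G => ∀ q : V,
    ((acycUniqueSource G q).ncard : ℤ) = signedSum (fun c => if c = 1 then 1 else 0) G)
    (fun V _ _ q => ?_) (fun V _ _ G hG ih q => ?_) V G q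
  · rw [ncard_acycUniqueSource_bot, signedSum_bot]
    split_ifs <;> rfl
  · by_cases hq : ∃ v, G.Adj q v
    · obtain ⟨v, h⟩ := hq
      rw [ncard_acycUniqueSource_eq_deleteEdges_add_contractEdge h,
        signedSum_eq_deleteEdges_add_contractEdge _ h, Nat.cast_add, (ih q v h).1, (ih q v h).2]
    · push Not at hq
      rw [acycUniqueSource_eq_empty hq hG, signedSum_eq_zero_of_isolated hq hG, Set.ncard_empty,
        Nat.cast_zero]

end Induction

/-- for a connected graph Y on n vertices, n·T_Y(1,0) ≤ T_Y(2,0). -/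
theorem card_mul_tutte_le {V : Type*} [Fintype V] [DecidableEq V]
    (Y : SimpleGraph V) [DecidableRel Y.Adj] (hY : Y.Connected) :
    (Fintype.card V : ℤ) * tutte Y 1 0 ≤ tutte Y 2 0 := by
  have hdisj : Pairwise (Disjoint on acycUniqueSource Y) := fun q q' hne =>
    Set.disjoint_left.2 fun _ ⟨_, hs⟩ ⟨_, hs'⟩ =>
      hne (Set.singleton_eq_singleton_iff.1 (hs.symm.trans hs'))
  calc (Fintype.card V : ℤ) * tutte Y 1 0 = ∑ q : V, ((acycUniqueSource Y q).ncard : ℤ) := by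
        simp [tutte_one_zero hY, ncard_acycUniqueSource_eq_signedSum]
    _ = ((⋃ q, acycUniqueSource Y q).ncard : ℤ) := by
        rw [Set.ncard_iUnion_of_finite (fun _ => Set.toFinite _) hdisj, finsum_eq_sum_of_fintype,
          Nat.cast_sum]
    _ ≤ (Acyc Y).ncard := by
        exact_mod_cast Set.ncard_le_ncard
          (Set.iUnion_subset fun q _ hr => (hr : _ ∈ acycUniqueSource Y q).1)
    _ = tutte Y 2 0 := by
        rw [tutte_two_zero, ncard_acyc_eq_signedSum]

end AcycPaper
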